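/- Let q > 1 be a real number and let C be a convex cone in ℝⁿ (with the standard inner product) with nonempty interior. Then the function F(s) = ∑_{y ∈ C^∨ ∩ ℤⁿ} exp(−(log q)·∑_{i=1}^n y_i·s_i) is complex-differentiable (holomorphic) on the open set {s ∈ ℂⁿ : (Re s₁, …, Re s_n) lies in the interior of C}. -/

import Mathlib

/-! If the ball of radius `δ` around `Re s` lies in `C`, then testing the dual-cone inequality
against `Re s - δ • y / ‖y‖` gives `⟪Re s, y⟫ ≥ δ ‖y‖` for every `y ∈ C^∨`. So near each point of
the tube the terms, and the derivatives `exp(-log q ⟪y, s⟫) · (-log q ⟪y, ·⟫)`, are bounded by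
`const · exp (-k ∑ |yᵢ|)`, which is summable over `ℤⁿ` as a product of geometric series. A series
of holomorphic functions with summable derivative bounds may be differentiated termwise. -/

open Finset Metric Filter Topology

theorem summable_pi_prod_of_nonneg {ι : Type*} [Fintype ι] {κ : ι → Type*}
    {f : ∀ i, κ i → ℝ} (hf₀ : ∀ i a, 0 ≤ f i a) (hf : ∀ i, Summable (f i)) :
    Summable fun x : ∀ i, κ i => ∏ i, f i (x i) := by
  classical
  refine summable_of_sum_le (c := ∏ i, ∑' a, f i a)
    (fun x => prod_nonneg fun i _ => hf₀ i (x i)) fun s => ?_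
  calc ∑ x ∈ s, ∏ i, f i (x i)
      ≤ ∑ x ∈ Fintype.piFinset fun i => s.image (· i), ∏ i, f i (x i) :=
        sum_le_sum_of_subset_of_nonneg
          (fun x hx => Fintype.mem_piFinset.2 fun i => mem_image_of_mem _ hx)
          fun x _ _ => prod_nonneg fun i _ => hf₀ i (x i)
    _ = ∏ i, ∑ a ∈ s.image (· i), f i a := (prod_univ_sum _ _).symm
    _ ≤ ∏ i, ∑' a, f i a :=
        prod_le_prod (fun i _ => sum_nonneg fun a _ => hf₀ i a)
          fun i _ => (hf i).sum_le_tsum _ fun a _ => hf₀ i a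

theorem summable_exp_neg_mul_abs_int {c : ℝ} (hc : 0 < c) :
    Summable fun m : ℤ => Real.exp (-c * |(m : ℝ)|) := by
  have h : Summable fun k : ℕ => Real.exp (k * -c) :=
    Real.summable_exp_nat_mul_iff.2 (neg_neg_of_pos hc)
  refine .of_nat_of_neg ?_ ?_ <;> simpa [mul_comm] using h

theorem summable_exp_neg_mul_sum_abs {ι : Type*} [Fintype ι] {c : ℝ} (hc : 0 < c) :
    Summable fun y : ι → ℤ => Real.exp (-c * ∑ i, |(y i : ℝ)|) := by
  simpa only [mul_sum, Real.exp_sum] using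
    summable_pi_prod_of_nonneg (fun _ _ => (Real.exp_pos _).le)
      fun _ => summable_exp_neg_mul_abs_int hc

theorem mul_exp_neg_mul_le {k : ℝ} (hk : 0 < k) (t : ℝ) :
    t * Real.exp (-k * t) ≤ 2 / k * Real.exp (-(k / 2) * t) := by
  have hexp : Real.exp (-k * t) = Real.exp (-(k / 2 * t)) * Real.exp (-(k / 2) * t) := by
    rw [← Real.exp_add]; ring_nf
  calc t * Real.exp (-k * t)
      = 2 / k * (k / 2 * t * Real.exp (-(k / 2 * t))) * Real.exp (-(k / 2) * t) := by
        rw [hexp]; field_simp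
    _ ≤ 2 / k * 1 * Real.exp (-(k / 2) * t) := by
        gcongr
        exact (Real.mul_exp_neg_le_exp_neg_one _).trans (Real.exp_le_one_iff.2 (by norm_num))
    _ = 2 / k * Real.exp (-(k / 2) * t) := by rw [mul_one]

theorem exists_mul_norm_le_inner_of_mem_interior {E : Type*} [NormedAddCommGroup E]
    [InnerProductSpace ℝ E] {S : Set E} {x₀ : E} (hx₀ : x₀ ∈ interior S) :
    ∃ δ > 0, ∀ x ∈ ball x₀ δ, ∀ v : E, (∀ z ∈ S, 0 ≤ inner ℝ z v) →
      δ * ‖v‖ ≤ inner ℝ x v := by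
  obtain ⟨ε, hε, hball⟩ := Metric.mem_nhds_iff.1 (mem_interior_iff_mem_nhds.1 hx₀)
  refine ⟨ε / 2, half_pos hε, fun x hx v hv => ?_⟩
  rcases eq_or_ne v 0 with rfl | hv0
  · simp
  have hvn : 0 < ‖v‖ := norm_pos_iff.2 hv0
  set z := x - (ε / 2 / ‖v‖) • v
  have hzx : dist z x = ε / 2 := by
    rw [dist_eq_norm, sub_sub_cancel_left, norm_neg, norm_smul,
      Real.norm_of_nonneg (by positivity), div_mul_cancel₀ _ hvn.ne']
  have hz : z ∈ S := hball <| mem_ball.2 <|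
    calc dist z x₀ ≤ dist z x + dist x x₀ := dist_triangle _ _ _
      _ < ε / 2 + ε / 2 := add_lt_add_of_le_of_lt hzx.le (mem_ball.1 hx)
      _ = ε := add_halves ε
  have hzv := hv z hz
  rw [inner_sub_left, real_inner_smul_left, real_inner_self_eq_norm_sq, sq, ← mul_assoc,
    div_mul_cancel₀ _ hvn.ne'] at hzv
  linarith

theorem sum_abs_le_card_mul_norm {ι : Type*} [Fintype ι] (v : EuclideanSpace ℝ ι) :
    ∑ i, |v i| ≤ Fintype.card ι * ‖v‖ := by
  calc ∑ i, |v i| ≤ ∑ _i : ι, ‖v‖ := sum_le_sum fun i _ => PiLp.norm_apply_le v i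
    _ = Fintype.card ι * ‖v‖ := by rw [sum_const, card_univ, nsmul_eq_mul]

theorem exists_eventually_mul_sum_abs_le_sum_mul_re {ι : Type*} [Fintype ι]
    {C : Set (EuclideanSpace ℝ ι)} {s₀ : ι → ℂ}
    (hs₀ : WithLp.toLp 2 (fun i => (s₀ i).re) ∈ interior C) :
    ∃ c > 0, ∀ᶠ s in 𝓝 s₀, ∀ y : ι → ℝ, (∀ x ∈ C, 0 ≤ inner ℝ x (WithLp.toLp 2 y)) →
      c * ∑ i, |y i| ≤ ∑ i, y i * (s i).re := by
  obtain ⟨δ, hδ, hcone⟩ := exists_mul_norm_le_inner_of_mem_interior hs₀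
  have hre : Continuous fun s : ι → ℂ => WithLp.toLp 2 fun i => (s i).re :=
    (PiLp.continuous_toLp 2 _).comp
      (continuous_pi fun i => Complex.continuous_re.comp (continuous_apply i))
  refine ⟨δ / (Fintype.card ι + 1), by positivity, ?_⟩
  filter_upwards [hre.continuousAt.preimage_mem_nhds (ball_mem_nhds _ hδ)] with s hs y hy
  have hinner := hcone _ hs _ hy
  have hnorm := sum_abs_le_card_mul_norm (WithLp.toLp 2 y)
  simp only [PiLp.inner_apply, RCLike.inner_apply, conj_trivial] at hinner hnorm
  have hcard : δ / (Fintype.card ι + 1) * Fintype.card ι ≤ δ := by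
    rw [div_mul_eq_mul_div, div_le_iff₀ (by positivity)]
    nlinarith
  calc δ / (Fintype.card ι + 1) * ∑ i, |y i|
      ≤ δ / (Fintype.card ι + 1) * (Fintype.card ι * ‖WithLp.toLp 2 y‖) := by gcongr
    _ ≤ δ * ‖WithLp.toLp 2 y‖ := by rw [← mul_assoc]; gcongr
    _ ≤ ∑ i, y i * (s i).re := hinner

section WeightedSum

variable {𝕜 ι : Type*} [NontriviallyNormedField 𝕜] [Fintype ι]

noncomputable def weightedSumCLM (w : ι → 𝕜) : (ι → 𝕜) →L[𝕜] 𝕜 :=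
  ∑ i, w i • ContinuousLinearMap.proj i

@[simp]
theorem weightedSumCLM_apply (w s : ι → 𝕜) : weightedSumCLM w s = ∑ i, w i * s i := by
  simp [weightedSumCLM]

theorem norm_weightedSumCLM_le (w : ι → 𝕜) : ‖weightedSumCLM w‖ ≤ ∑ i, ‖w i‖ :=
  ContinuousLinearMap.opNorm_le_bound _ (sum_nonneg fun _ _ => norm_nonneg _) fun s => by
    rw [weightedSumCLM_apply, sum_mul]
    refine (norm_sum_le _ _).trans (sum_le_sum fun i _ => ?_)
    rw [norm_mul]
    gcongr
    exact norm_le_pi_norm s i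

end WeightedSum

theorem differentiableAt_tsum_cexp_neg_mul_sum {ι Y : Type*} [Fintype ι] {w : Y → ι → ℝ}
    {a c : ℝ} (ha : 0 < a) (hc : 0 < c) {s₀ : ι → ℂ}
    (hdecay : ∀ᶠ s in 𝓝 s₀, ∀ y, c * ∑ i, |w y i| ≤ ∑ i, w y i * (s i).re)
    (hsum : ∀ k > 0, Summable fun y => Real.exp (-k * ∑ i, |w y i|)) :
    DifferentiableAt ℂ
      (fun s => ∑' y, Complex.exp (-((a : ℂ) * ∑ i, (w y i : ℂ) * s i))) s₀ := by
  obtain ⟨ε, hε, hball⟩ := Metric.eventually_nhds_iff_ball.1 hdecay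
  set T : Y → ℝ := fun y => ∑ i, |w y i|
  set φ : Y → (ι → ℂ) →L[ℂ] ℂ := fun y => -((a : ℂ) • weightedSumCLM fun i => (w y i : ℂ))
  have hφ : ∀ y s, φ y s = -((a : ℂ) * ∑ i, (w y i : ℂ) * s i) := by simp [φ]
  have hnorm_exp : ∀ y, ∀ s ∈ ball s₀ ε,
      ‖Complex.exp (φ y s)‖ ≤ Real.exp (-(a * c) * T y) := by
    intro y s hs
    rw [Complex.norm_exp, hφ, Real.exp_le_exp]
    simp only [Complex.neg_re, Complex.re_ofReal_mul, Complex.re_sum]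
    have := mul_le_mul_of_nonneg_left (hball s hs y) ha.le
    linarith
  have hnorm_φ : ∀ y, ‖φ y‖ ≤ a * T y := by
    intro y
    rw [norm_neg, norm_smul, Complex.norm_real, Real.norm_of_nonneg ha.le]
    gcongr
    simpa using norm_weightedSumCLM_le fun i => (w y i : ℂ)
  have hderiv : ∀ y, ∀ s ∈ ball s₀ ε,
      ‖Complex.exp (φ y s) • φ y‖ ≤ 2 / c * Real.exp (-(a * c / 2) * T y) := by
    intro y s hs
    calc ‖Complex.exp (φ y s) • φ y‖ ≤ Real.exp (-(a * c) * T y) * (a * T y) := by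
          rw [norm_smul]
          exact mul_le_mul (hnorm_exp y s hs) (hnorm_φ y) (norm_nonneg _) (Real.exp_pos _).le
      _ = a * (T y * Real.exp (-(a * c) * T y)) := by ring
      _ ≤ a * (2 / (a * c) * Real.exp (-(a * c / 2) * T y)) :=
          mul_le_mul_of_nonneg_left (mul_exp_neg_mul_le (by positivity) _) ha.le
      _ = 2 / c * Real.exp (-(a * c / 2) * T y) := by field_simp
  have hsum₀ : Summable fun y => Complex.exp (φ y s₀) :=
    .of_norm_bounded (hsum _ (by positivity)) fun y => hnorm_exp y s₀ (mem_ball_self hε)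
  have hF := hasFDerivAt_tsum_of_isPreconnected ((hsum _ (by positivity)).mul_left (2 / c))
    isOpen_ball (convex_ball s₀ ε).isPreconnected (fun y s _ => (φ y).hasFDerivAt.cexp) hderiv
    (mem_ball_self hε) hsum₀ (mem_ball_self hε)
  simpa only [hφ] using hF.differentiableAt

theorem stmt_10_general (q : ℝ) (hq : 1 < q) (n : ℕ)
    (C : ConvexCone ℝ (EuclideanSpace ℝ (Fin n))) :
    DifferentiableOn ℂ
      (fun s : Fin n → ℂ =>
        ∑' y : {y : Fin n → ℤ //
            ∀ x ∈ C, (0:ℝ) ≤ inner ℝ x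
              ((WithLp.equiv 2 (Fin n → ℝ)).symm fun i => (y i : ℝ))},
          Complex.exp (-((Real.log q : ℂ) * ∑ i, ((y : Fin n → ℤ) i : ℂ) * s i)))
      {s : Fin n → ℂ |
        ((WithLp.equiv 2 (Fin n → ℝ)).symm fun i => (s i).re) ∈
          interior (C : Set (EuclideanSpace ℝ (Fin n)))} := by
  intro s₀ hs₀
  obtain ⟨c, hc, hdecay⟩ := exists_eventually_mul_sum_abs_le_sum_mul_re hs₀
  simp only [← Complex.ofReal_intCast]
  exact (differentiableAt_tsum_cexp_neg_mul_sum (Real.log_pos hq) hc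
    (hdecay.mono fun s hs y => hs _ y.2)
    fun k hk => (summable_exp_neg_mul_sum_abs hk).subtype _).differentiableWithinAt

/-- The series `F(s) = ∑_{y ∈ C^∨ ∩ ℤⁿ} exp(−log q·∑ y_i s_i)` defines a
holomorphic function on the tube over the interior of the convex cone `C`. -/
theorem stmt_10 (q : ℝ) (hq : 1 < q) (n : ℕ)
    (C : ConvexCone ℝ (EuclideanSpace ℝ (Fin n)))
    (hC : (interior (C : Set (EuclideanSpace ℝ (Fin n)))).Nonempty) :
    DifferentiableOn ℂ
      (fun s : Fin n → ℂ =>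
        ∑' y : {y : Fin n → ℤ //
            ∀ x ∈ C, (0:ℝ) ≤ inner ℝ x
              ((WithLp.equiv 2 (Fin n → ℝ)).symm fun i => (y i : ℝ))},
          Complex.exp (-((Real.log q : ℂ) * ∑ i, ((y : Fin n → ℤ) i : ℂ) * s i)))
      {s : Fin n → ℂ |
        ((WithLp.equiv 2 (Fin n → ℝ)).symm fun i => (s i).re) ∈
          interior (C : Set (EuclideanSpace ℝ (Fin n)))} :=
  stmt_10_general q hq n C
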